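/- Let L, m be positive integers, let H be a real m×L matrix, let P > 0, and let A be an L×L matrix with integer entries and det A ≠ 0, with columns a₁,…,a_L ∈ ℤ^L. Then L · min_{1 ≤ i ≤ L} ( −(1/2)·log₂( aᵢᵀ(I_L + P·HᵀH)⁻¹aᵢ ) ) ≤ (1/2)·log₂ det(I_L + P·HᵀH). Consequently, if all L users transmit at the common computation rate of a full-rank set of L integer equations, that common rate cannot make the sum rate exceed the MAC sum capacity, i.e., the relay can recover all individual messages. -/

import Mathlib

/-!
For `M = I + P HᵀH` and the integer matrix `A`, the Gram matrix `N = Aᵀ M⁻¹ A` has diagonal entries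
`aᵢᵀ M⁻¹ aᵢ` and determinant `det(A)² / det M ≥ 1 / det M`, since `det A` is a nonzero integer.
By AM-GM on its eigenvalues, `det N ≤ (tr N / L)^L ≤ (maxᵢ Nᵢᵢ)^L`. Taking `-½ log₂` turns
`1 ≤ det M · (maxᵢ Nᵢᵢ)^L` into `L · minᵢ Rᵢ ≤ ½ log₂ det M`.
-/

open Matrix Finset

theorem Finset.prod_le_sum_div_card_pow {ι : Type*} (s : Finset ι) {z : ι → ℝ}
    (hz : ∀ i ∈ s, 0 ≤ z i) : ∏ i ∈ s, z i ≤ ((∑ i ∈ s, z i) / #s) ^ #s := by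
  rcases s.eq_empty_or_nonempty with rfl | hs
  · simp
  have hcard : (0 : ℝ) < #s := by exact_mod_cast hs.card_pos
  have amgm := Real.geom_mean_le_arith_mean s (fun _ => 1) z (fun _ _ => zero_le_one)
    (by simpa using hcard) hz
  simp only [Real.rpow_one, sum_const, nsmul_eq_mul, mul_one, one_mul] at amgm
  have hprod : 0 ≤ ∏ i ∈ s, z i := prod_nonneg hz
  calc ∏ i ∈ s, z i = ((∏ i ∈ s, z i) ^ (#s : ℝ)⁻¹) ^ #s := by
        rw [← Real.rpow_mul_natCast hprod, inv_mul_cancel₀ hcard.ne', Real.rpow_one]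
    _ ≤ ((∑ i ∈ s, z i) / #s) ^ #s := by gcongr

section

variable {n : Type*} [Fintype n] [DecidableEq n]

theorem Matrix.PosSemidef.det_le_trace_div_card_pow {N : Matrix n n ℝ} (hN : N.PosSemidef) :
    N.det ≤ (N.trace / Fintype.card n) ^ Fintype.card n := by
  have hH := hN.isHermitian
  rw [hH.det_eq_prod_eigenvalues, hH.trace_eq_sum_eigenvalues]
  simpa using prod_le_sum_div_card_pow univ fun i _ => hN.eigenvalues_nonneg i

theorem Matrix.PosSemidef.det_le_pow_of_diag_le {N : Matrix n n ℝ} (hN : N.PosSemidef) {t : ℝ}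
    (hdiag : ∀ i, N i i ≤ t) : N.det ≤ t ^ Fintype.card n := by
  rcases isEmpty_or_nonempty n with _ | _
  · simp
  refine hN.det_le_trace_div_card_pow.trans (pow_le_pow_left₀ ?_ ?_ _)
  · exact div_nonneg hN.trace_nonneg (Nat.cast_nonneg _)
  · rw [div_le_iff₀ (by exact_mod_cast Fintype.card_pos)]
    calc N.trace = ∑ i, N i i := rfl
      _ ≤ ∑ _i : n, t := sum_le_sum fun i _ => hdiag i
      _ = t * Fintype.card n := by simp [mul_comm]

end

theorem Matrix.posDef_one_add_smul_transpose_mul_self {m n : Type*} [Fintype m] [Fintype n]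
    [DecidableEq n] (H : Matrix m n ℝ) {P : ℝ} (hP : 0 ≤ P) : (1 + P • (Hᵀ * H)).PosDef :=
  PosDef.one.add_posSemidef ((posSemidef_conjTranspose_mul_self H).smul hP)

theorem Matrix.transpose_mul_mul_self_apply_self {m n : Type*} [Fintype m]
    (A : Matrix m n ℝ) (B : Matrix m m ℝ) (i : n) :
    (Aᵀ * B * A) i i = (fun j => A j i) ⬝ᵥ (B *ᵥ fun j => A j i) := by
  rw [Matrix.mul_assoc, mul_apply]
  simp [dotProduct, mulVec, mul_apply]

theorem Matrix.det_mul_det_transpose_mul_inv_mul {n K : Type*} [Fintype n] [DecidableEq n]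
    [Field K] {M : Matrix n n K} (hM : M.det ≠ 0) (A : Matrix n n K) :
    M.det * (Aᵀ * M⁻¹ * A).det = A.det ^ 2 := by
  rw [det_mul, det_mul, det_transpose, det_nonsing_inv, Ring.inverse_eq_inv']
  field_simp

theorem Int.one_le_cast_sq {z : ℤ} (hz : z ≠ 0) : (1 : ℝ) ≤ (z : ℝ) ^ 2 := by
  rw [one_le_sq_iff_one_le_abs, ← Int.cast_abs]
  exact_mod_cast Int.one_le_abs hz

theorem Matrix.PosDef.exists_one_le_det_mul_pow_card {n : Type*} [Fintype n] [DecidableEq n]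
    [Nonempty n] {M : Matrix n n ℝ} (hM : M.PosDef) {A : Matrix n n ℤ} (hA : A.det ≠ 0) :
    ∃ i, 1 ≤ M.det *
      ((fun j => (A j i : ℝ)) ⬝ᵥ (M⁻¹ *ᵥ fun j => (A j i : ℝ))) ^ Fintype.card n := by
  let A' : Matrix n n ℝ := A.map (↑)
  let N := A'ᵀ * M⁻¹ * A'
  obtain ⟨i₀, -, hi₀⟩ := exists_max_image univ (fun i => N i i) univ_nonempty
  have hdiag : N i₀ i₀ = (fun j => (A j i₀ : ℝ)) ⬝ᵥ (M⁻¹ *ᵥ fun j => (A j i₀ : ℝ)) :=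
    transpose_mul_mul_self_apply_self A' M⁻¹ i₀
  refine ⟨i₀, hdiag ▸ ?_⟩
  have hN : N.PosSemidef := by
    simpa only [conjTranspose_eq_transpose_of_trivial] using
      hM.inv.posSemidef.conjTranspose_mul_mul_same A'
  have hA' : A'.det = A.det := (RingHom.map_det (Int.castRingHom ℝ) A).symm
  calc (1 : ℝ) ≤ (A.det : ℝ) ^ 2 := Int.one_le_cast_sq hA
    _ = M.det * N.det := by rw [← hA', det_mul_det_transpose_mul_inv_mul hM.det_pos.ne']
    _ ≤ M.det * N i₀ i₀ ^ Fintype.card n := by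
      gcongr
      · exact hM.det_pos.le
      · exact hN.det_le_pow_of_diag_le fun i => hi₀ i (mem_univ i)

theorem stmt7_general (L m : ℕ) (hL : 0 < L)
    (H : Matrix (Fin m) (Fin L) ℝ) (P : ℝ) (hP : 0 < P)
    (A : Matrix (Fin L) (Fin L) ℤ) (hA : A.det ≠ 0) :
    (L : ℝ) *
      (Finset.univ.inf' ⟨⟨0, hL⟩, Finset.mem_univ _⟩
        (fun i : Fin L =>
          -((1/2) * Real.logb 2
            ((fun j => (A j i : ℝ)) ⬝ᵥ
              (((1 : Matrix (Fin L) (Fin L) ℝ) + P • (Hᵀ * H))⁻¹ *ᵥ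
                fun j => (A j i : ℝ))))))
      ≤ (1/2) * Real.logb 2 ((1 : Matrix (Fin L) (Fin L) ℝ) + P • (Hᵀ * H)).det := by
  have hM := posDef_one_add_smul_transpose_mul_self H hP.le
  have : Nonempty (Fin L) := ⟨⟨0, hL⟩⟩
  obtain ⟨i₀, hone⟩ := hM.exists_one_le_det_mul_pow_card hA
  rw [Fintype.card_fin] at hone
  have hlog := Real.logb_nonneg one_lt_two hone
  rw [Real.logb_mul hM.det_pos.ne' (right_ne_zero_of_mul (one_pos.trans_le hone).ne'),
    Real.logb_pow] at hlog
  refine (mul_le_mul_of_nonneg_left (inf'_le _ (mem_univ i₀)) L.cast_nonneg).trans ?_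
  linarith

/-- for an integer `L×L` matrix `A` with `det A ≠ 0` and columns
`a₁,…,a_L`, `L` times the minimum of the computation rates
`−(1/2)·log₂(aᵢᵀ(I_L + P·HᵀH)⁻¹aᵢ)` is at most the MAC sum capacity
`(1/2)·log₂ det(I_L + P·HᵀH)`. -/
theorem stmt7 (L m : ℕ) (hL : 0 < L) (hm : 0 < m)
    (H : Matrix (Fin m) (Fin L) ℝ) (P : ℝ) (hP : 0 < P)
    (A : Matrix (Fin L) (Fin L) ℤ) (hA : A.det ≠ 0) :
    (L : ℝ) *
      (Finset.univ.inf' ⟨⟨0, hL⟩, Finset.mem_univ _⟩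
        (fun i : Fin L =>
          -((1/2) * Real.logb 2
            ((fun j => (A j i : ℝ)) ⬝ᵥ
              (((1 : Matrix (Fin L) (Fin L) ℝ) + P • (Hᵀ * H))⁻¹ *ᵥ
                fun j => (A j i : ℝ))))))
      ≤ (1/2) * Real.logb 2 ((1 : Matrix (Fin L) (Fin L) ℝ) + P • (Hᵀ * H)).det :=
  stmt7_general L m hL H P hP A hA
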